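/- Let μ < 0, K₀ > 0, and suppose m₁, m₂ : [0,T) → ℝ are differentiable with m₁ ≤ m₂, m₁'(t) ≤ μ·m₁(t)² + K₀·(m₂(t) − m₁(t)) and m₂'(t) ≤ μ·m₂(t)² + K₀·(m₂(t) − m₁(t)) for all t. If m₁(0) + m₂(0) ≤ 2K₀/μ, then m₁(t) + m₂(t) ≤ 2K₀/μ for all t ∈ [0,T). -/

import Mathlib

/-! With `c = 2K₀/μ`, so that `μc = 2K₀`, adding the two differential inequalities gives
`(m₁ + m₂)' ≤ 2K₀ (m₁ + m₂ - c) + μ ((m₁ - c)² + m₂²) ≤ 2K₀ (m₁ + m₂ - c)` because `μ < 0`.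
By Grönwall's inequality, `m₁ + m₂ - c` stays nonpositive once it starts nonpositive. -/

open Set

theorem nonpos_of_hasDerivAt_le_mul_self {f f' : ℝ → ℝ} {K a b : ℝ}
    (hf : ∀ x ∈ Ico a b, HasDerivAt f (f' x) x) (bound : ∀ x ∈ Ico a b, f' x ≤ K * f x)
    (ha : f a ≤ 0) : ∀ x ∈ Ico a b, f x ≤ 0 := by
  intro x hx
  have hsub : Icc a x ⊆ Ico a b := Icc_subset_Ico_right hx.2
  calc f x ≤ gronwallBound 0 K 0 (x - a) :=
        le_gronwallBound_of_liminf_deriv_right_le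
          (fun y hy => (hf y (hsub hy)).continuousAt.continuousWithinAt)
          (fun y hy _ hr =>
            (hf y (hsub (Ico_subset_Icc_self hy))).hasDerivWithinAt.liminf_right_slope_le hr)
          ha (fun y hy => by simpa using bound y (hsub (Ico_subset_Icc_self hy)))
          x (right_mem_Icc.2 hx.1)
    _ = 0 := gronwallBound_ε0_δ0 K _

theorem mul_sq_add_mul_sq_add_le {μ K c a b : ℝ} (hμ : μ ≤ 0) (hc : μ * c = 2 * K) :
    μ * a ^ 2 + μ * b ^ 2 + 2 * K * (b - a) ≤ 2 * K * (a + b - c) := by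
  have hgap : 2 * K * (a + b - c) - (μ * a ^ 2 + μ * b ^ 2 + 2 * K * (b - a)) =
      -μ * ((a - c) ^ 2 + b ^ 2) := by rw [← hc]; ring
  linarith [mul_nonneg (neg_nonneg.2 hμ) (add_nonneg (sq_nonneg (a - c)) (sq_nonneg b))]

theorem stmt_10_general (T μ K0 : ℝ) (hμ : μ < 0)
    (m1 m2 m1' m2' : ℝ → ℝ)
    (hd1 : ∀ t ∈ Set.Ico (0 : ℝ) T, HasDerivAt m1 (m1' t) t)
    (hd2 : ∀ t ∈ Set.Ico (0 : ℝ) T, HasDerivAt m2 (m2' t) t)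
    (hi1 : ∀ t ∈ Set.Ico (0 : ℝ) T, m1' t ≤ μ * (m1 t) ^ 2 + K0 * (m2 t - m1 t))
    (hi2 : ∀ t ∈ Set.Ico (0 : ℝ) T, m2' t ≤ μ * (m2 t) ^ 2 + K0 * (m2 t - m1 t))
    (h0 : m1 0 + m2 0 ≤ 2 * K0 / μ) :
    ∀ t ∈ Set.Ico (0 : ℝ) T, m1 t + m2 t ≤ 2 * K0 / μ := by
  have hc : μ * (2 * K0 / μ) = 2 * K0 := mul_div_cancel₀ _ hμ.ne
  have hsum : ∀ t ∈ Ico (0 : ℝ) T,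
      HasDerivAt (fun s => m1 s + m2 s - 2 * K0 / μ) (m1' t + m2' t) t :=
    fun t ht => ((hd1 t ht).add (hd2 t ht)).sub_const _
  have hdrift : ∀ t ∈ Ico (0 : ℝ) T,
      m1' t + m2' t ≤ 2 * K0 * (m1 t + m2 t - 2 * K0 / μ) := fun t ht => by
    linarith [hi1 t ht, hi2 t ht, mul_sq_add_mul_sq_add_le (a := m1 t) (b := m2 t) hμ.le hc]
  intro t ht
  have hnonpos := nonpos_of_hasDerivAt_le_mul_self hsum hdrift (by simpa using h0) t ht
  linarith [hnonpos]

theorem stmt_10 (T μ K0 : ℝ) (hμ : μ < 0) (hK0 : 0 < K0)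
    (m1 m2 m1' m2' : ℝ → ℝ)
    (hle : ∀ t ∈ Set.Ico (0 : ℝ) T, m1 t ≤ m2 t)
    (hd1 : ∀ t ∈ Set.Ico (0 : ℝ) T, HasDerivAt m1 (m1' t) t)
    (hd2 : ∀ t ∈ Set.Ico (0 : ℝ) T, HasDerivAt m2 (m2' t) t)
    (hi1 : ∀ t ∈ Set.Ico (0 : ℝ) T, m1' t ≤ μ * (m1 t) ^ 2 + K0 * (m2 t - m1 t))
    (hi2 : ∀ t ∈ Set.Ico (0 : ℝ) T, m2' t ≤ μ * (m2 t) ^ 2 + K0 * (m2 t - m1 t))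
    (h0 : m1 0 + m2 0 ≤ 2 * K0 / μ) :
    ∀ t ∈ Set.Ico (0 : ℝ) T, m1 t + m2 t ≤ 2 * K0 / μ :=
  stmt_10_general T μ K0 hμ m1 m2 m1' m2' hd1 hd2 hi1 hi2 h0
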